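/- Let (α, μ) be a σ-finite measure space and τ : α → α a measure-preserving map. Let f : α → ℝ be measurable with f·1_{{|f|>λ}} integrable for every λ > 0 (i.e. f ∈ R₀). Then the Birkhoff averages Aₙf converge almost uniformly: there is a measurable function g such that for every ε > 0 there exists a measurable set E ⊆ α with μ(α \ E) < ε on which Aₙf converges to g uniformly. -/

import Mathlib

open MeasureTheory Filter Finset
open scoped ENNReal Topology

/-!
The a.e. convergence of Birkhoff averages of an integrable `g` rests on Hopf's maximal ergodic
lemma, `∫ g ≥ 0` over the set where some Birkhoff sum of `g` is positive (Garsia's proof). Applied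
to `g - c·1_F` it yields the maximal inequality `c · μ {some average of g exceeds c} ≤ ∫ |g|`.
Applied on the exactly invariant set where the Birkhoff sums of both `g - b` and `a - g` are
unbounded above (a set of finite measure, by the maximal inequality), it gives
`b μ W ≤ ∫_W g ≤ a μ W`, so that set is null whenever `a < b`; this excludes oscillation.

Egorov's theorem then gives almost uniform convergence on the finite-measure set where some
average of `|g|` exceeds `δ`, and off that set all averages are at most `δ` anyway. Finally
`f ∈ R₀` is uniformly within `λ` of the integrable function `f·1_{|f|>λ}`, so the averages of
`f` are uniformly within `λ` of almost uniformly convergent ones; hence they are almost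
uniformly Cauchy, and converge almost uniformly to their pointwise limit.
-/

section BirkhoffSum

variable {α : Type*} {τ : α → α} {g : α → ℝ}

def maxBirkhoffSum (τ : α → α) (g : α → ℝ) (N : ℕ) (x : α) : ℝ :=
  (range (N + 1)).sup' nonempty_range_add_one fun n => birkhoffSum τ g n x

theorem birkhoffSum_le_maxBirkhoffSum {n N : ℕ} (hn : n ≤ N) (x : α) :
    birkhoffSum τ g n x ≤ maxBirkhoffSum τ g N x :=
  le_sup' (fun n => birkhoffSum τ g n x) (mem_range.2 (Nat.lt_succ_of_le hn))

theorem maxBirkhoffSum_nonneg (N : ℕ) (x : α) : 0 ≤ maxBirkhoffSum τ g N x := by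
  simpa using birkhoffSum_le_maxBirkhoffSum (τ := τ) (g := g) N.zero_le x

theorem zero_lt_maxBirkhoffSum_iff {N : ℕ} {x : α} :
    0 < maxBirkhoffSum τ g N x ↔ ∃ n ≤ N, 0 < birkhoffSum τ g n x := by
  simp [maxBirkhoffSum, lt_sup'_iff]

theorem maxBirkhoffSum_le_add_comp {N : ℕ} {x : α} (hx : 0 < maxBirkhoffSum τ g N x) :
    maxBirkhoffSum τ g N x ≤ g x + maxBirkhoffSum τ g N (τ x) := by
  obtain ⟨n, hn, hmax⟩ :=
    exists_mem_eq_sup' (nonempty_range_add_one (n := N)) fun n => birkhoffSum τ g n x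
  rw [maxBirkhoffSum, hmax] at hx ⊢
  obtain ⟨m, rfl⟩ : ∃ m, n = m + 1 :=
    Nat.exists_eq_add_one.2 <| Nat.pos_of_ne_zero <| by rintro rfl; simp at hx
  rw [birkhoffSum_succ']
  gcongr
  exact birkhoffSum_le_maxBirkhoffSum (by simp at hn; omega) _

def birkhoffPos (τ : α → α) (g : α → ℝ) : Set α :=
  {x | ∃ n, 0 < birkhoffSum τ g n x}

theorem birkhoffSum_mono {g' : α → ℝ} (h : ∀ y, g y ≤ g' y) (n : ℕ) (x : α) :
    birkhoffSum τ g n x ≤ birkhoffSum τ g' n x :=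
  sum_le_sum fun _ _ => h _

theorem birkhoffSum_indicator {U : Set α} (hU : τ ⁻¹' U = U) (n : ℕ) :
    birkhoffSum τ (U.indicator g) n = U.indicator (birkhoffSum τ g n) := by
  ext x
  have hiter (k : ℕ) : τ^[k] x ∈ U ↔ x ∈ U := by
    rw [← Set.mem_preimage, Set.preimage_iterate_eq, Function.iterate_fixed hU]
  by_cases hx : x ∈ U <;> simp [birkhoffSum, hiter, hx, Set.indicator]

theorem abs_birkhoffAverage_le {c : ℝ} (hc : 0 ≤ c) {n : ℕ} {x : α}
    (h : birkhoffSum τ (fun y => |g y| - c) n x ≤ 0) : |birkhoffAverage ℝ τ g n x| ≤ c := by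
  rcases n.eq_zero_or_pos with rfl | hn
  · simpa using hc
  have hsum : birkhoffSum τ (fun y => |g y| - c) n x =
      birkhoffSum τ (fun y => |g y|) n x - n * c := by
    simp [birkhoffSum, sum_sub_distrib]
  rw [birkhoffAverage, smul_eq_mul, abs_mul, abs_inv, Nat.abs_cast, inv_mul_le_iff₀ (by positivity)]
  calc |birkhoffSum τ g n x| ≤ birkhoffSum τ (fun y => |g y|) n x := abs_sum_le_sum_abs _ _
    _ ≤ n * c := by linarith

-- Unlike the level sets of `limsup` of the averages, this set is exactly `τ`-invariant.
def birkhoffUnbounded (τ : α → α) (g : α → ℝ) : Set α :=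
  {x | ¬BddAbove (Set.range fun n => birkhoffSum τ g n x)}

theorem preimage_birkhoffUnbounded : τ ⁻¹' birkhoffUnbounded τ g = birkhoffUnbounded τ g := by
  ext x
  simp only [birkhoffUnbounded, Set.mem_preimage, Set.mem_ofPred_eq, not_iff_not, bddAbove_def,
    Set.forall_mem_range]
  constructor
  · rintro ⟨C, hC⟩
    refine ⟨max 0 (g x + C), fun n => ?_⟩
    cases n with
    | zero => simp
    | succ n => exact le_max_of_le_right (by rw [birkhoffSum_succ']; linarith [hC n])
  · rintro ⟨C, hC⟩
    exact ⟨C - g x, fun n => by linarith [hC (n + 1), birkhoffSum_succ' τ g n x]⟩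

theorem birkhoffUnbounded_subset_birkhoffPos : birkhoffUnbounded τ g ⊆ birkhoffPos τ g :=
  fun x hx => by
    obtain ⟨_, ⟨n, rfl⟩, hn⟩ := not_bddAbove_iff.1 hx 0
    exact ⟨n, hn⟩

theorem mem_birkhoffUnbounded_of_frequently_lt {x : α} {b b' : ℝ} (hb : b < b')
    (h : ∃ᶠ n in atTop, b' < birkhoffAverage ℝ τ g n x) :
    x ∈ birkhoffUnbounded τ (fun y => g y - b) := by
  refine not_bddAbove_iff.2 fun C => ?_
  obtain ⟨n, hn, hCn⟩ := (h.and_eventually (eventually_gt_atTop ⌈C / (b' - b)⌉₊)).exists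
  have hn0 : (0 : ℝ) < n := by exact_mod_cast (Nat.zero_le _).trans_lt hCn
  have hsum : birkhoffSum τ (fun y => g y - b) n x = n * (birkhoffAverage ℝ τ g n x - b) := by
    simp [birkhoffAverage, birkhoffSum, sum_sub_distrib, mul_sub, hn0.ne']
  refine ⟨_, ⟨n, rfl⟩, ?_⟩
  simp only [hsum]
  calc C < n * (b' - b) :=
        (div_lt_iff₀ (sub_pos.2 hb)).1 ((Nat.le_ceil _).trans_lt (by exact_mod_cast hCn))
    _ < n * (birkhoffAverage ℝ τ g n x - b) := by gcongr

end BirkhoffSum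

section Ergodic

variable {α : Type*} [MeasurableSpace α] {μ : Measure α} {τ : α → α} {g : α → ℝ}

theorem measurable_birkhoffSum (hτ : Measurable τ) (hg : Measurable g) (n : ℕ) :
    Measurable (birkhoffSum τ g n) :=
  Finset.measurable_sum _ fun k _ => hg.comp (hτ.iterate k)

theorem measurable_birkhoffAverage (hτ : Measurable τ) (hg : Measurable g) (n : ℕ) :
    Measurable (birkhoffAverage ℝ τ g n) :=
  (measurable_birkhoffSum hτ hg n).const_smul ((n : ℝ)⁻¹)

theorem measurableSet_birkhoffPos (hτ : Measurable τ) (hg : Measurable g) :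
    MeasurableSet (birkhoffPos τ g) := by
  simp only [birkhoffPos, Set.ofPred_exists]
  exact .iUnion fun n => measurableSet_lt measurable_const (measurable_birkhoffSum hτ hg n)

theorem measurableSet_birkhoffUnbounded (hτ : Measurable τ) (hg : Measurable g) :
    MeasurableSet (birkhoffUnbounded τ g) :=
  (measurableSet_bddAbove_range (measurable_birkhoffSum hτ hg)).compl

theorem integrable_birkhoffSum (hτ : MeasurePreserving τ μ μ) (hg : Integrable g μ) (n : ℕ) :
    Integrable (birkhoffSum τ g n) μ :=
  integrable_finsetSum _ fun k _ => (hτ.iterate k).integrable_comp_of_integrable hg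

theorem integral_comp_of_measurePreserving (hτ : MeasurePreserving τ μ μ) (hg : Integrable g μ) :
    ∫ x, g (τ x) ∂μ = ∫ x, g x ∂μ := by
  rw [← integral_map hτ.aemeasurable (by rw [hτ.map_eq]; exact hg.aestronglyMeasurable),
    hτ.map_eq]

theorem measurable_maxBirkhoffSum (hτ : Measurable τ) (hg : Measurable g) (N : ℕ) :
    Measurable (maxBirkhoffSum τ g N) := by
  convert Finset.measurable_sup' (nonempty_range_add_one (n := N)) fun n _ =>
    measurable_birkhoffSum hτ hg n
  ext x
  simp [maxBirkhoffSum, Finset.sup'_apply]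

theorem integrable_maxBirkhoffSum (hτ : MeasurePreserving τ μ μ) (hgm : Measurable g)
    (hg : Integrable g μ) (N : ℕ) : Integrable (maxBirkhoffSum τ g N) μ := by
  refine (integrable_finsetSum (range (N + 1)) fun n _ =>
    (integrable_birkhoffSum hτ hg n).abs).mono'
    (measurable_maxBirkhoffSum hτ.measurable hgm N).aestronglyMeasurable (ae_of_all _ fun x => ?_)
  obtain ⟨n, hn, hmax⟩ := exists_mem_eq_sup' nonempty_range_add_one fun n => birkhoffSum τ g n x
  rw [Real.norm_eq_abs, maxBirkhoffSum, hmax]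
  exact single_le_sum (f := fun n => |birkhoffSum τ g n x|) (fun _ _ => abs_nonneg _) hn

theorem setIntegral_maxBirkhoffSum_pos_nonneg (hτ : MeasurePreserving τ μ μ) (hgm : Measurable g)
    (hg : Integrable g μ) (N : ℕ) :
    0 ≤ ∫ x in {x | 0 < maxBirkhoffSum τ g N x}, g x ∂μ := by
  set M := maxBirkhoffSum τ g N
  have hM := integrable_maxBirkhoffSum hτ hgm hg N
  have hMτ : Integrable (fun x => M (τ x)) μ := hτ.integrable_comp_of_integrable hM
  calc 0 = ∫ x, M x ∂μ - ∫ x, M (τ x) ∂μ := by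
        rw [integral_comp_of_measurePreserving hτ hM, sub_self]
    _ ≤ ∫ x in {x | 0 < M x}, M x ∂μ - ∫ x in {x | 0 < M x}, M (τ x) ∂μ := by
      rw [setIntegral_eq_integral_of_forall_compl_eq_zero (s := {x | 0 < M x}) fun x hx =>
        le_antisymm (not_lt.1 hx) (maxBirkhoffSum_nonneg N x)]
      gcongr
      · exact ae_of_all _ fun x => maxBirkhoffSum_nonneg N (τ x)
      · exact Measure.restrict_le_self
    _ = ∫ x in {x | 0 < M x}, (M x - M (τ x)) ∂μ :=
      (integral_sub hM.integrableOn hMτ.integrableOn).symm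
    _ ≤ ∫ x in {x | 0 < M x}, g x ∂μ :=
      setIntegral_mono_on (hM.sub hMτ).integrableOn hg.integrableOn
        (measurableSet_lt measurable_const (measurable_maxBirkhoffSum hτ.measurable hgm N))
        fun x hx => by linarith [maxBirkhoffSum_le_add_comp hx]

theorem setIntegral_birkhoffPos_nonneg (hτ : MeasurePreserving τ μ μ)
    (hgm : Measurable g) (hg : Integrable g μ) :
    0 ≤ ∫ x in birkhoffPos τ g, g x ∂μ := by
  have hunion : birkhoffPos τ g = ⋃ N, {x | 0 < maxBirkhoffSum τ g N x} := by
    ext x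
    simp only [birkhoffPos, Set.mem_ofPred_eq, Set.mem_iUnion, zero_lt_maxBirkhoffSum_iff]
    exact ⟨fun ⟨n, hn⟩ => ⟨n, n, le_rfl, hn⟩, fun ⟨_, n, _, hn⟩ => ⟨n, hn⟩⟩
  have hmono : Monotone fun N => {x | 0 < maxBirkhoffSum τ g N x} := fun N N' h x hx => by
    simp only [Set.mem_ofPred_eq, zero_lt_maxBirkhoffSum_iff] at hx ⊢
    obtain ⟨n, hn, hpos⟩ := hx
    exact ⟨n, hn.trans h, hpos⟩
  rw [hunion]
  refine ge_of_tendsto (tendsto_setIntegral_of_monotone (fun N => ?_) hmono hg.integrableOn)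
    (Eventually.of_forall (setIntegral_maxBirkhoffSum_pos_nonneg hτ hgm hg))
  exact measurableSet_lt measurable_const (measurable_maxBirkhoffSum hτ.measurable hgm N)

theorem setIntegral_nonneg_of_preimage_eq (hτ : MeasurePreserving τ μ μ) (hgm : Measurable g)
    {U : Set α} (hU : MeasurableSet U) (hinv : τ ⁻¹' U = U) (hgU : Integrable (U.indicator g) μ)
    (hsub : U ⊆ birkhoffPos τ g) : 0 ≤ ∫ x in U, g x ∂μ := by
  have hset : birkhoffPos τ (U.indicator g) = U := by
    ext x
    by_cases hx : x ∈ U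
    · simpa [birkhoffPos, birkhoffSum_indicator hinv, hx] using hsub hx
    · simp [birkhoffPos, birkhoffSum_indicator hinv, hx]
  have := setIntegral_birkhoffPos_nonneg hτ (hgm.indicator hU) hgU
  rwa [hset, setIntegral_indicator hU, Set.inter_self] at this

section SigmaFinite

variable [SigmaFinite μ]

theorem measure_birkhoffPos_sub_le (hτ : MeasurePreserving τ μ μ)
    (hgm : Measurable g) (hg : Integrable g μ) {c : ℝ} (hc : 0 < c) :
    μ (birkhoffPos τ fun y => g y - c) ≤
      ENNReal.ofReal ((∫ x, |g x| ∂μ) / c) := by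
  -- Hopf's lemma for `g - c·1_F` with `μ F < ∞` gives the bound on `F`; then exhaust by `F`.
  rw [← Measure.iSup_restrict_spanningSets]
  refine iSup_le fun k => ?_
  set F := spanningSets μ k
  have hF : MeasurableSet F := measurableSet_spanningSets μ k
  have hFfin : μ F ≠ ∞ := (measure_spanningSets_lt_top μ k).ne
  set φ : α → ℝ := fun y => g y - F.indicator (fun _ => c) y
  have hφm : Measurable φ := hgm.sub (measurable_const.indicator hF)
  have hφ : Integrable φ μ := hg.sub ((integrable_indicator_iff hF).2 (integrableOn_const hFfin))
  set B := birkhoffPos τ φ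
  have hAB : (birkhoffPos τ fun y => g y - c) ⊆ B := fun x ⟨n, hn⟩ =>
    ⟨n, hn.trans_le (birkhoffSum_mono (fun y => by
      simp only [φ]; linarith [F.indicator_le_self' (fun _ _ => hc.le) y]) n x)⟩
  have hBF : c * μ.real (B ∩ F) ≤ ∫ x, |g x| ∂μ := by
    have hopf := setIntegral_birkhoffPos_nonneg hτ hφm hφ
    rw [integral_sub hg.integrableOn ((integrable_indicator_iff hF).2
      (integrableOn_const hFfin)).integrableOn, setIntegral_indicator hF, setIntegral_const,
      smul_eq_mul, mul_comm] at hopf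
    calc c * μ.real (B ∩ F) ≤ ∫ x in B, g x ∂μ := by linarith
      _ ≤ ∫ x in B, |g x| ∂μ :=
        setIntegral_mono hg.integrableOn hg.abs.integrableOn fun _ => le_abs_self _
      _ ≤ ∫ x, |g x| ∂μ := setIntegral_le_integral hg.abs (ae_of_all _ fun _ => abs_nonneg _)
  rw [Measure.restrict_apply' hF, ENNReal.le_ofReal_iff_toReal_le
    (measure_ne_top_of_subset Set.inter_subset_right hFfin) (by positivity), le_div_iff₀ hc]
  calc (μ _).toReal * c ≤ μ.real (B ∩ F) * c := by
        gcongr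
        exact measureReal_mono (Set.inter_subset_inter_left _ hAB)
          (measure_ne_top_of_subset Set.inter_subset_right hFfin)
    _ ≤ _ := by linarith

theorem measure_birkhoffUnbounded_sub_le (hτ : MeasurePreserving τ μ μ) (hgm : Measurable g)
    (hg : Integrable g μ) {c : ℝ} (hc : 0 < c) :
    μ (birkhoffUnbounded τ fun y => g y - c) ≤ ENNReal.ofReal ((∫ x, |g x| ∂μ) / c) :=
  (measure_mono birkhoffUnbounded_subset_birkhoffPos).trans
    (measure_birkhoffPos_sub_le hτ hgm hg hc)

theorem ae_isBoundedUnder_le_birkhoffAverage (hτ : MeasurePreserving τ μ μ) (hgm : Measurable g)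
    (hg : Integrable g μ) :
    ∀ᵐ x ∂μ, IsBoundedUnder (· ≤ ·) atTop (birkhoffAverage ℝ τ g · x) := by
  have hnull : μ (⋂ m : ℕ, birkhoffUnbounded τ fun y => g y - m) = 0 := by
    have hlim : Tendsto (fun m : ℕ => ENNReal.ofReal ((∫ x, |g x| ∂μ) / m)) atTop (𝓝 0) := by
      simpa using ENNReal.tendsto_ofReal (tendsto_const_div_atTop_nhds_zero_nat _)
    refine le_antisymm (ge_of_tendsto hlim ?_) bot_le
    filter_upwards [eventually_gt_atTop 0] with m hm
    exact (measure_mono (Set.iInter_subset _ m)).trans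
      (measure_birkhoffUnbounded_sub_le hτ hgm hg (Nat.cast_pos.2 hm))
  filter_upwards [measure_eq_zero_iff_ae_notMem.1 hnull] with x hx
  by_contra hunb
  refine hx (Set.mem_iInter.2 fun m => mem_birkhoffUnbounded_of_frequently_lt (lt_add_one _) ?_)
  exact fun hev => hunb (isBoundedUnder_of_eventually_le (by simpa using hev))

theorem measure_birkhoffUnbounded_inter_eq_zero (hτ : MeasurePreserving τ μ μ)
    (hgm : Measurable g) (hg : Integrable g μ) {a b : ℝ} (hab : a < b) :
    μ ((birkhoffUnbounded τ fun y => g y - b) ∩ birkhoffUnbounded τ fun y => (-g) y - -a) = 0 := by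
  set W := (birkhoffUnbounded τ fun y => g y - b) ∩ birkhoffUnbounded τ fun y => (-g) y - -a
  have hW : MeasurableSet W :=
    (measurableSet_birkhoffUnbounded hτ.measurable (hgm.sub_const b)).inter
      (measurableSet_birkhoffUnbounded hτ.measurable (hgm.neg.sub_const _))
  have hinv : τ ⁻¹' W = W := by
    simp only [W, Set.preimage_inter, preimage_birkhoffUnbounded]
  have hfin : μ W ≠ ∞ := by
    rcases lt_or_ge 0 b with hb | hb
    · exact ne_top_of_le_ne_top ENNReal.ofReal_ne_top <| (measure_mono Set.inter_subset_left).trans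
        (measure_birkhoffUnbounded_sub_le hτ hgm hg hb)
    · exact ne_top_of_le_ne_top ENNReal.ofReal_ne_top <| (measure_mono Set.inter_subset_right).trans
        (measure_birkhoffUnbounded_sub_le hτ hgm.neg hg.neg (by linarith : 0 < -a))
  have hnonneg {φ : α → ℝ} (c : ℝ) (hφm : Measurable φ) (hφ : Integrable φ μ)
      (hWφ : W ⊆ birkhoffUnbounded τ fun y => φ y - c) : 0 ≤ ∫ x in W, (φ x - c) ∂μ :=
    setIntegral_nonneg_of_preimage_eq hτ (hφm.sub_const c) hW hinv
      ((integrable_indicator_iff hW).2 (hφ.integrableOn.sub (integrableOn_const hfin)))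
      (hWφ.trans birkhoffUnbounded_subset_birkhoffPos)
  have h1 := hnonneg b hgm hg Set.inter_subset_left
  have h2 := hnonneg (-a) hgm.neg hg.neg Set.inter_subset_right
  rw [integral_sub hg.integrableOn (integrableOn_const hfin), setIntegral_const] at h1
  rw [integral_sub hg.neg.integrableOn (integrableOn_const hfin), setIntegral_const] at h2
  simp only [Pi.neg_apply, integral_neg, smul_eq_mul] at h1 h2
  have hreal : μ.real W = 0 := le_antisymm (by nlinarith) measureReal_nonneg
  exact (measureReal_eq_zero_iff hfin).1 hreal

theorem ae_tendsto_birkhoffAverage (hτ : MeasurePreserving τ μ μ) (hgm : Measurable g)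
    (hg : Integrable g μ) :
    ∀ᵐ x ∂μ, ∃ c, Tendsto (birkhoffAverage ℝ τ g · x) atTop (𝓝 c) := by
  have hosc : ∀ᵐ x ∂μ, ∀ a b : ℚ, a < b →
      x ∉ (birkhoffUnbounded τ fun y => g y - b) ∩ birkhoffUnbounded τ fun y => (-g) y - -a := by
    simp only [ae_all_iff]
    exact fun a b hab => measure_eq_zero_iff_ae_notMem.1
      (measure_birkhoffUnbounded_inter_eq_zero hτ hgm hg (by exact_mod_cast hab))
  filter_upwards [ae_isBoundedUnder_le_birkhoffAverage hτ hgm hg,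
    ae_isBoundedUnder_le_birkhoffAverage hτ hgm.neg hg.neg, hosc] with x hle hge hx
  refine tendsto_of_no_upcrossings Rat.denseRange_cast ?_ hle ?_
  · rintro _ ⟨a, rfl⟩ _ ⟨b, rfl⟩ hab ⟨ha, hb⟩
    have hab' : a < b := by exact_mod_cast hab
    refine hx ((2 * a + b) / 3) ((a + 2 * b) / 3) (by linarith) ⟨?_, ?_⟩
    · exact mem_birkhoffUnbounded_of_frequently_lt (b' := b) (by push_cast; linarith) hb
    · refine mem_birkhoffUnbounded_of_frequently_lt (b' := -a) (by push_cast; linarith) ?_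
      simpa [birkhoffAverage_neg] using ha
  · rw [birkhoffAverage_neg] at hge
    exact isBoundedUnder_le_neg.1 hge

end SigmaFinite

def AlmostUniformCauchySeq {ι β : Type*} [UniformSpace β] (μ : Measure α) (F : ι → α → β)
    (p : Filter ι) : Prop :=
  ∀ ε ≠ (0 : ℝ≥0∞), ∃ E, MeasurableSet E ∧ μ Eᶜ < ε ∧ UniformCauchySeqOn F p E

section AlmostUniformCauchySeq

variable {ι β : Type*} [PseudoMetricSpace β] {F : ι → α → β} {p : Filter ι}

theorem almostUniformCauchySeq_of_forall_dist_le
    (h : ∀ δ > 0, ∀ ε ≠ (0 : ℝ≥0∞), ∃ E, MeasurableSet E ∧ μ Eᶜ < ε ∧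
      ∀ᶠ q in p ×ˢ p, ∀ x ∈ E, dist (F q.1 x) (F q.2 x) ≤ δ) :
    AlmostUniformCauchySeq μ F p := by
  intro ε hε
  obtain ⟨ε', hε'pos, hε'sum⟩ := ENNReal.exists_pos_sum_of_countable hε ℕ
  choose E hEm hEμ hEF using fun j : ℕ =>
    h (1 / (j + 1)) (by positivity) (ε' j) (by exact_mod_cast (hε'pos j).ne')
  refine ⟨⋂ j, E j, .iInter hEm, ?_, fun u hu => ?_⟩
  · rw [Set.compl_iInter]
    exact (measure_iUnion_le _).trans_lt
      ((ENNReal.tsum_le_tsum fun j => (hEμ j).le).trans_lt hε'sum)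
  · obtain ⟨δ, hδ, hδu⟩ := Metric.mem_uniformity_dist.1 hu
    obtain ⟨j, hj⟩ := exists_nat_one_div_lt hδ
    filter_upwards [hEF j] with q hq x hx
    exact hδu ((hq x (Set.mem_iInter.1 hx j)).trans_lt hj)

theorem AlmostUniformCauchySeq.of_forall_dist_le
    (h : ∀ δ > 0, ∃ G, AlmostUniformCauchySeq μ G p ∧ ∀ i x, dist (F i x) (G i x) ≤ δ) :
    AlmostUniformCauchySeq μ F p := by
  refine almostUniformCauchySeq_of_forall_dist_le fun δ hδ ε hε => ?_
  obtain ⟨G, hG, hFG⟩ := h (δ / 3) (by positivity)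
  obtain ⟨E, hEm, hEμ, hE⟩ := hG ε hε
  refine ⟨E, hEm, hEμ, ?_⟩
  filter_upwards [hE _ (Metric.dist_mem_uniformity (by positivity : 0 < δ / 3))] with q hq x hx
  calc dist (F q.1 x) (F q.2 x)
      ≤ dist (F q.1 x) (G q.1 x) + dist (G q.1 x) (G q.2 x) + dist (G q.2 x) (F q.2 x) :=
        dist_triangle4 _ _ _ _
    _ ≤ δ / 3 + δ / 3 + δ / 3 := by
        gcongr
        exacts [hFG _ _, (hq x hx).le, dist_comm (F q.2 x) _ ▸ hFG _ _]
    _ = δ := by ring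

end AlmostUniformCauchySeq

section SigmaFinite

variable [SigmaFinite μ]

theorem almostUniformCauchySeq_birkhoffAverage_of_integrable (hτ : MeasurePreserving τ μ μ)
    (hgm : Measurable g) (hg : Integrable g μ) :
    AlmostUniformCauchySeq μ (birkhoffAverage ℝ τ g) atTop := by
  refine almostUniformCauchySeq_of_forall_dist_le fun δ hδ ε hε => ?_
  -- Egorov's theorem needs finite measure: it is applied on `G`; off `G`, `|A n| ≤ δ / 2`.
  set G := birkhoffPos τ (fun y => |g y| - δ / 2)
  have hGm : MeasurableSet G :=
    measurableSet_birkhoffPos hτ.measurable (hgm.abs.sub_const _)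
  have hGfin : μ G ≠ ∞ := ne_top_of_le_ne_top ENNReal.ofReal_ne_top
    (measure_birkhoffPos_sub_le hτ hgm.abs hg.abs (by positivity))
  have hAm := measurable_birkhoffAverage hτ.measurable hgm
  set A := birkhoffAverage ℝ τ g
  have hlim : ∀ᵐ x ∂μ, x ∈ G → Tendsto (A · x) atTop (𝓝 (limUnder atTop (A · x))) := by
    filter_upwards [ae_tendsto_birkhoffAverage hτ hgm hg] with x hx _
    exact tendsto_nhds_limUnder hx
  obtain ⟨r, -, hr, hrε⟩ := ENNReal.lt_iff_exists_real_btwn.1 (pos_iff_ne_zero.2 hε)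
  obtain ⟨t, -, htm, htμ, htu⟩ := tendstoUniformlyOn_of_ae_tendsto
    (fun n => (hAm n).stronglyMeasurable)
    (StronglyMeasurable.limUnder fun n => (hAm n).stronglyMeasurable) hGm hGfin hlim
    (ENNReal.ofReal_pos.1 hr)
  refine ⟨tᶜ, htm.compl, by rw [compl_compl]; exact htμ.trans_lt hrε, ?_⟩
  filter_upwards [htu.uniformCauchySeqOn _ (Metric.dist_mem_uniformity hδ)] with q hq x hx
  by_cases hxG : x ∈ G
  · exact (hq x ⟨hxG, hx⟩).le
  · simp only [G, birkhoffPos, Set.mem_ofPred_eq, not_exists, not_lt] at hxG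
    calc dist _ _ ≤ |A q.1 x| + |A q.2 x| := by
          rw [Real.dist_eq]; exact abs_sub _ _
      _ ≤ δ / 2 + δ / 2 := add_le_add (abs_birkhoffAverage_le (by positivity) (hxG _))
          (abs_birkhoffAverage_le (by positivity) (hxG _))
      _ = δ := by ring

theorem almostUniformCauchySeq_birkhoffAverage (hτ : MeasurePreserving τ μ μ)
    (hgm : Measurable g) (hg : ∀ l : ℝ, 0 < l → Integrable ({x | l < |g x|}.indicator g) μ) :
    AlmostUniformCauchySeq μ (birkhoffAverage ℝ τ g) atTop := by
  refine AlmostUniformCauchySeq.of_forall_dist_le fun δ hδ => ⟨_,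
    almostUniformCauchySeq_birkhoffAverage_of_integrable hτ
      (hgm.indicator (measurableSet_lt measurable_const hgm.abs)) (hg δ hδ), fun n x => ?_⟩
  rw [Real.dist_eq, ← Pi.sub_apply (birkhoffAverage ℝ τ g n),
    ← Pi.sub_apply (birkhoffAverage ℝ τ g), ← birkhoffAverage_sub]
  refine abs_birkhoffAverage_le hδ.le (sum_nonpos fun k _ => sub_nonpos.2 ?_)
  by_cases hk : δ < |g (τ^[k] x)| <;> simp [Set.indicator, hk, not_lt.1, hδ.le]

end SigmaFinite

end Ergodic

/-- Almost uniform convergence of Birkhoff averages for `f ∈ R₀ = (L₁ + L∞)₀`. -/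
theorem birkhoff_R0_almost_uniform {α : Type*} [MeasurableSpace α] (μ : Measure α)
    [SigmaFinite μ] (τ : α → α) (hτ : MeasurePreserving τ μ μ)
    (f : α → ℝ) (hf : Measurable f)
    (hR0 : ∀ l : ℝ, 0 < l → Integrable ({x | l < |f x|}.indicator f) μ) :
    ∃ g : α → ℝ, Measurable g ∧
      ∀ ε : ℝ, 0 < ε → ∃ E : Set α, MeasurableSet E ∧ μ Eᶜ < ENNReal.ofReal ε ∧
        TendstoUniformlyOn
          (fun (n : ℕ) (x : α) => (n : ℝ)⁻¹ * ∑ k ∈ Finset.range n, f (τ^[k] x))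
          g atTop E := by
  have hAm := measurable_birkhoffAverage hτ.measurable hf
  refine ⟨fun x => limUnder atTop (birkhoffAverage ℝ τ f · x),
    (StronglyMeasurable.limUnder fun n => (hAm n).stronglyMeasurable).measurable, fun ε hε => ?_⟩
  obtain ⟨E, hEm, hEμ, hE⟩ :=
    almostUniformCauchySeq_birkhoffAverage hτ hf hR0 _ (ENNReal.ofReal_pos.2 hε).ne'
  exact ⟨E, hEm, hEμ, hE.tendstoUniformlyOn_of_tendsto fun x hx =>
    tendsto_nhds_limUnder (cauchySeq_tendsto_of_complete (hE.cauchySeq hx))⟩
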